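/- Suppose a graph G has 2-vertices x₁, …, x_ℓ pairwise at distance at least 3. Then exhaustive application of the degree-2 contraction rule (P2) reduces the vertex cover budget k by at least ℓ. -/

import Mathlib

open Finset

/-- `I` is an independent set of vertices in `G`. -/
def IsIndep (G : SimpleGraph ℕ) (I : Finset ℕ) : Prop :=
  ∀ u ∈ I, ∀ v ∈ I, ¬ G.Adj u v

open Classical in
/-- The neighborhood of `I` inside the induced subgraph of `G` on `S`. -/
noncomputable def nbrOn (G : SimpleGraph ℕ) (S I : Finset ℕ) : Finset ℕ :=
  S.filter (fun v => v ∉ I ∧ ∃ u ∈ I, G.Adj u v)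

/-- The surplus of `I` inside the induced subgraph of `G` on `S`. -/
noncomputable def surpOn (G : SimpleGraph ℕ) (S I : Finset ℕ) : ℤ :=
  ((nbrOn G S I).card : ℤ) - (I.card : ℤ)

/-- `I` is a critical-set of the induced subgraph of `G` on `S`. -/
def IsCriticalOn (G : SimpleGraph ℕ) (S I : Finset ℕ) : Prop :=
  I ⊆ S ∧ I.Nonempty ∧ IsIndep G I ∧
    ∀ J ⊆ I, J.Nonempty → surpOn G S I ≤ surpOn G S J

/-- A vertex cover instance: a graph on `ℕ`, its (finite) vertex set `S`, and a budget `k`. -/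
structure VCInst where
  G : SimpleGraph ℕ
  S : Finset ℕ
  k : ℤ

/-- Preprocessing rule (P2) applied to the critical-set `I` with surplus `1`: delete
`N[I]`, add a fresh vertex `y` adjacent to `N(N(I))`, and reduce the budget by `|I|`. -/
noncomputable def P2StepWith (A B : VCInst) (I : Finset ℕ) : Prop :=
  IsCriticalOn A.G A.S I ∧ surpOn A.G A.S I = 1 ∧
  ∃ y : ℕ, y ∉ A.S \ (I ∪ nbrOn A.G A.S I) ∧
    B.S = insert y (A.S \ (I ∪ nbrOn A.G A.S I)) ∧
    B.k = A.k - I.card ∧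
    (∀ a ∈ A.S \ (I ∪ nbrOn A.G A.S I), ∀ b ∈ A.S \ (I ∪ nbrOn A.G A.S I),
      (B.G.Adj a b ↔ A.G.Adj a b)) ∧
    (∀ a ∈ A.S \ (I ∪ nbrOn A.G A.S I),
      (B.G.Adj a y ↔ a ∈ nbrOn A.G A.S (nbrOn A.G A.S I)))

/-- The degree-2 contraction rule: rule (P2) applied to a single (degree-2) vertex. -/
noncomputable def Deg2Step (A B : VCInst) : Prop :=
  ∃ v : ℕ, P2StepWith A B {v}

/-!
Contracting at a 2-vertex `v` only changes adjacencies inside the second neighbourhood of `v`.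
A vertex `u` at distance at least `3` from `v` lies outside `N[v]` and outside `N(N(v))`, so its
neighbourhood is untouched, and two such vertices stay at distance at least `3`. Hence after
contracting at `x₁` (budget `k - 1`) the remaining `x₂, …, x_ℓ` are again 2-vertices pairwise at
distance at least `3`, and induction on `ℓ` finishes.
-/

section Contraction

variable {G : SimpleGraph ℕ} {S I : Finset ℕ} {v w y : ℕ}

@[simp]
lemma mem_nbrOn : v ∈ nbrOn G S I ↔ v ∈ S ∧ v ∉ I ∧ ∃ u ∈ I, G.Adj u v := by
  classical
  simp [nbrOn]

noncomputable def deleteClosedNbr (G : SimpleGraph ℕ) (S I : Finset ℕ) : Finset ℕ :=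
  S \ (I ∪ nbrOn G S I)

lemma mem_deleteClosedNbr_singleton :
    w ∈ deleteClosedNbr G S {v} ↔ w ∈ S ∧ w ≠ v ∧ ¬ G.Adj v w := by
  simp only [deleteClosedNbr, mem_sdiff, mem_union, mem_singleton, mem_nbrOn,
    exists_eq_left]
  tauto

lemma notMem_deleteClosedNbr_self : v ∉ deleteClosedNbr G S {v} := by
  simp [mem_deleteClosedNbr_singleton]

/-- The graph produced by rule (P2) on `I`, with `y` as the vertex replacing `N[I]`. -/
noncomputable def contractGraph (G : SimpleGraph ℕ) (S I : Finset ℕ) (y : ℕ) : SimpleGraph ℕ :=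
  SimpleGraph.fromRel fun a b => a ∈ deleteClosedNbr G S I ∧
    (b ∈ deleteClosedNbr G S I ∧ G.Adj a b ∨ b = y ∧ a ∈ nbrOn G S (nbrOn G S I))

lemma contractGraph_adj_of_mem {a b : ℕ} (hy : y ∉ deleteClosedNbr G S I)
    (ha : a ∈ deleteClosedNbr G S I) (hb : b ∈ deleteClosedNbr G S I) :
    (contractGraph G S I y).Adj a b ↔ G.Adj a b := by
  have hay : a ≠ y := ne_of_mem_of_not_mem ha hy
  have hby : b ≠ y := ne_of_mem_of_not_mem hb hy
  simp only [contractGraph, SimpleGraph.fromRel_adj, ha, hb, hay, hby, true_and, false_and,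
    or_false, G.adj_comm b a, or_self, and_iff_right_iff_imp]
  exact G.ne_of_adj

lemma contractGraph_adj_fresh {a : ℕ} (hy : y ∉ deleteClosedNbr G S I)
    (ha : a ∈ deleteClosedNbr G S I) :
    (contractGraph G S I y).Adj a y ↔ a ∈ nbrOn G S (nbrOn G S I) := by
  have hay : a ≠ y := ne_of_mem_of_not_mem ha hy
  simp only [contractGraph, SimpleGraph.fromRel_adj, ha, hy, hay, true_and, false_and,
    or_false, false_or, ne_eq, not_false_eq_true]

lemma contractGraph_adj_iff_of_notMem_nbrOn {a b : ℕ} (hy : y ∉ deleteClosedNbr G S I)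
    (ha : a ∈ deleteClosedNbr G S I) (ha₂ : a ∉ nbrOn G S (nbrOn G S I))
    (hb : b ∈ insert y (deleteClosedNbr G S I)) :
    (contractGraph G S I y).Adj a b ↔ b ∈ deleteClosedNbr G S I ∧ G.Adj a b := by
  rcases mem_insert.mp hb with rfl | hb
  · simp only [contractGraph_adj_fresh hy ha, ha₂, hy, false_and]
  · simp only [contractGraph_adj_of_mem hy ha hb, hb, true_and]

lemma p2StepWith_contract (hy : y ∉ deleteClosedNbr G S I) (hI : IsCriticalOn G S I)
    (hsurp : surpOn G S I = 1) (k : ℤ) :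
    P2StepWith ⟨G, S, k⟩ ⟨contractGraph G S I y, insert y (deleteClosedNbr G S I),
      k - I.card⟩ I :=
  ⟨hI, hsurp, y, hy, rfl, rfl, fun _ ha _ hb => contractGraph_adj_of_mem hy ha hb,
    fun _ ha => contractGraph_adj_fresh hy ha⟩

lemma isCriticalOn_singleton (hv : v ∈ S) : IsCriticalOn G S {v} := by
  refine ⟨singleton_subset_iff.mpr hv, singleton_nonempty v, ?_, fun J hJ hJne => ?_⟩
  · simp only [IsIndep, mem_singleton, forall_eq]
    exact G.irrefl
  · rw [(subset_singleton_iff.mp hJ).resolve_left hJne.ne_empty]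

lemma deg2Step_contract (hv : v ∈ S) (hdeg : (nbrOn G S {v}).card = 2) (k : ℤ) :
    Deg2Step ⟨G, S, k⟩
      ⟨contractGraph G S {v} v, insert v (deleteClosedNbr G S {v}), k - 1⟩ := by
  refine ⟨v, ?_⟩
  simpa using p2StepWith_contract notMem_deleteClosedNbr_self (isCriticalOn_singleton hv)
    (by simp [surpOn, hdeg]) k

end Contraction

/-- `u` and `v` are at distance at least `3` in the subgraph of `G` induced on `S`. -/
def FarApartOn (G : SimpleGraph ℕ) (S : Finset ℕ) (u v : ℕ) : Prop :=
  u ≠ v ∧ ¬ G.Adj u v ∧ ∀ w ∈ S, ¬ (G.Adj u w ∧ G.Adj v w)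

namespace FarApartOn

variable {G : SimpleGraph ℕ} {S : Finset ℕ} {u v w z : ℕ}

lemma mem_deleteClosedNbr (h : FarApartOn G S v u) (hu : u ∈ S) :
    u ∈ deleteClosedNbr G S {v} :=
  mem_deleteClosedNbr_singleton.mpr ⟨hu, h.1.symm, h.2.1⟩

lemma mem_deleteClosedNbr_of_adj (h : FarApartOn G S v u) (hz : z ∈ S) (hadj : G.Adj u z) :
    z ∈ deleteClosedNbr G S {v} := by
  refine mem_deleteClosedNbr_singleton.mpr ⟨hz, ?_, fun hvz => h.2.2 z hz ⟨hvz, hadj⟩⟩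
  rintro rfl
  exact h.2.1 hadj.symm

lemma notMem_nbrOn_nbrOn (h : FarApartOn G S v u) : u ∉ nbrOn G S (nbrOn G S {v}) := by
  simp only [mem_nbrOn, mem_singleton, exists_eq_left, not_and, not_exists]
  intro _ _ z ⟨hz, _, hvz⟩ hzu
  exact h.2.2 z hz ⟨hvz, hzu.symm⟩

lemma contractGraph_adj_iff (h : FarApartOn G S v u) (hu : u ∈ S)
    (hz : z ∈ insert v (deleteClosedNbr G S {v})) :
    (contractGraph G S {v} v).Adj u z ↔ z ∈ deleteClosedNbr G S {v} ∧ G.Adj u z :=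
  contractGraph_adj_iff_of_notMem_nbrOn notMem_deleteClosedNbr_self
    (h.mem_deleteClosedNbr hu) h.notMem_nbrOn_nbrOn hz

lemma nbrOn_contractGraph (h : FarApartOn G S v u) (hu : u ∈ S) :
    nbrOn (contractGraph G S {v} v) (insert v (deleteClosedNbr G S {v})) {u} =
      nbrOn G S {u} := by
  ext z
  simp only [mem_nbrOn, mem_singleton, exists_eq_left]
  constructor
  · rintro ⟨hz, hzu, hadj⟩
    obtain ⟨hzR, hadj⟩ := (h.contractGraph_adj_iff hu hz).mp hadj
    exact ⟨(mem_sdiff.mp hzR).1, hzu, hadj⟩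
  · rintro ⟨hz, hzu, hadj⟩
    have hzR := h.mem_deleteClosedNbr_of_adj hz hadj
    exact ⟨mem_insert_of_mem hzR, hzu,
      (h.contractGraph_adj_iff hu (mem_insert_of_mem hzR)).mpr ⟨hzR, hadj⟩⟩

lemma contractGraph (huw : FarApartOn G S u w) (hvu : FarApartOn G S v u)
    (hvw : FarApartOn G S v w) (hu : u ∈ S) (hw : w ∈ S) :
    FarApartOn (contractGraph G S {v} v) (insert v (deleteClosedNbr G S {v})) u w := by
  have hwS' := mem_insert_of_mem (b := v) (hvw.mem_deleteClosedNbr hw)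
  refine ⟨huw.1, fun hadj => huw.2.1 ((hvu.contractGraph_adj_iff hu hwS').mp hadj).2,
    fun z hz ⟨hadju, hadjw⟩ => ?_⟩
  obtain ⟨hzR, hadju⟩ := (hvu.contractGraph_adj_iff hu hz).mp hadju
  exact huw.2.2 z (mem_sdiff.mp hzR).1 ⟨hadju, ((hvw.contractGraph_adj_iff hw hz).mp hadjw).2⟩

end FarApartOn

/-- If `G` has 2-vertices `x₁, …, x_ℓ` pairwise at distance at least 3 (distinct,
non-adjacent, with no common neighbor), then exhaustive application of the degree-2
contraction rule (P2) reduces the budget by at least `ℓ`. -/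
theorem deg2_contractions_reduce_budget (G : SimpleGraph ℕ) (S : Finset ℕ) (k : ℤ)
    (ℓ : ℕ) (x : Fin ℓ → ℕ)
    (hmem : ∀ i, x i ∈ S)
    (hdeg : ∀ i, (nbrOn G S {x i}).card = 2)
    (hfar : ∀ i j, i ≠ j → x i ≠ x j ∧ ¬ G.Adj (x i) (x j) ∧
      ∀ w ∈ S, ¬ (G.Adj (x i) w ∧ G.Adj (x j) w)) :
    ∃ B : VCInst, Relation.ReflTransGen Deg2Step ⟨G, S, k⟩ B ∧ B.k ≤ k - ℓ := by
  induction ℓ generalizing G S k with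
  | zero => exact ⟨⟨G, S, k⟩, .refl, by simp⟩
  | succ n ih =>
    have hfar₀ (j : Fin n) : FarApartOn G S (x 0) (x j.succ) :=
      hfar 0 j.succ (Fin.succ_ne_zero j).symm
    obtain ⟨B, hB, hk⟩ := ih (contractGraph G S {x 0} (x 0))
      (insert (x 0) (deleteClosedNbr G S {x 0})) (k - 1) (fun j => x j.succ)
      (fun j => mem_insert_of_mem ((hfar₀ j).mem_deleteClosedNbr (hmem _)))
      (fun j => by rw [(hfar₀ j).nbrOn_contractGraph (hmem _)]; exact hdeg _)
      (fun i j hij => FarApartOn.contractGraph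
        (hfar i.succ j.succ (Fin.succ_injective _ |>.ne hij)) (hfar₀ i) (hfar₀ j) (hmem _) (hmem _))
    refine ⟨B, .head (deg2Step_contract (hmem 0) (hdeg 0) k) hB, ?_⟩
    push_cast at hk ⊢
    linarith
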